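/- Let K be a field and let P = (p₁,…,p_m) be a σ-basis of a Hermite–Padé interpolation problem over K. Let r ≠ s, let α ∈ K[x], and suppose defect(p_r) ≥ defect(p_s) + deg(α). Then the sequence obtained from P by replacing p_s with p̃ = p_s + α·p_r is again a σ-basis of the same problem, and moreover defect(p̃) = defect(p_s). -/

import Mathlib

open Polynomial

/-- The term `nᵢ - deg pᵢ` entering the defect, valued `⊤` when `pᵢ = 0`
(i.e. when `deg pᵢ = -∞`). -/
def defectTerm {K : Type*} [Semiring K] (ni : ℕ) (p : K[X]) : WithTop ℤ :=
  WithBot.recBotCoe (⊤ : WithTop ℤ) (fun d : ℕ => (((ni : ℤ) - (d : ℤ) : ℤ) : WithTop ℤ)) p.degree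

/-- The defect of a polynomial vector `p` with respect to the degree bounds `n`:
the minimum of `nᵢ - deg pᵢ` over all components (components with `pᵢ = 0`
contribute `⊤` and hence do not affect the minimum unless `p = 0`). -/
def defect {K : Type*} [Semiring K] {m : ℕ} (n : Fin m → ℕ) (p : Fin m → K[X]) : WithTop ℤ :=
  Finset.univ.inf fun i => defectTerm (n i) (p i)

/-- `p` is a solution of the Hermite–Padé interpolation problem given by the
power series `f` and the order `σ`: the coefficient of `x^k` in
`p₁·f₁ + ⋯ + p_m·f_m` vanishes for all `k < σ`, i.e. `ord (p·f) ≥ σ`. -/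
def IsSolution {K : Type*} [CommSemiring K] {m : ℕ} (f : Fin m → PowerSeries K) (σ : ℕ)
    (p : Fin m → K[X]) : Prop :=
  ∀ k < σ, PowerSeries.coeff k (∑ i, (p i : PowerSeries K) * f i) = 0

/-- `i` is the critical index of `p`: the least index at which the defect is attained. -/
def IsCriticalIndex {K : Type*} [Semiring K] {m : ℕ} (n : Fin m → ℕ) (p : Fin m → K[X])
    (i : Fin m) : Prop :=
  defectTerm (n i) (p i) = defect n p ∧ ∀ j : Fin m, j < i → defectTerm (n j) (p j) ≠ defect n p

/-- `p` is normalised: its component at its critical index is monic. -/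
def IsNormalisedVec {K : Type*} [Semiring K] {m : ℕ} (n : Fin m → ℕ) (p : Fin m → K[X]) : Prop :=
  ∃ i : Fin m, IsCriticalIndex n p i ∧ (p i).Monic

/-- `p` is reduced with respect to `q`: at the critical index `j` of `q` we have
`deg p_j < deg q_j`. -/
def ReducedWrt {K : Type*} [Semiring K] {m : ℕ} (n : Fin m → ℕ) (p q : Fin m → K[X]) : Prop :=
  ∀ j : Fin m, IsCriticalIndex n q j → (p j).degree < (q j).degree

/-- A sequence of polynomial vectors is sorted if for `r < s` either the defect of `P r`
is strictly larger than that of `P s`, or the defects agree and the critical index of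
`P r` is smaller than that of `P s`. -/
def IsSortedSeq {K : Type*} [Semiring K] {m : ℕ} (n : Fin m → ℕ)
    (P : Fin m → Fin m → K[X]) : Prop :=
  ∀ r s : Fin m, r < s →
    defect n (P s) < defect n (P r) ∨
      (defect n (P r) = defect n (P s) ∧
        ∀ i j : Fin m, IsCriticalIndex n (P r) i → IsCriticalIndex n (P s) j → i < j)

/-- A sequence of polynomial vectors is normalised if it is sorted, pairwise reduced,
and all its members are normalised. -/
def IsNormalisedSeq {K : Type*} [Semiring K] {m : ℕ} (n : Fin m → ℕ)
    (P : Fin m → Fin m → K[X]) : Prop :=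
  IsSortedSeq n P ∧ (∀ r s : Fin m, r ≠ s → ReducedWrt n (P r) (P s)) ∧
    ∀ r, IsNormalisedVec n (P r)

/-- `P` is a σ-basis of the Hermite–Padé interpolation problem given by `f`, `n` and `σ`:
every member is a solution, every solution `q` has a unique representation
`q = Σ_r α_r • P_r`, and in this representation `defect q ≤ defect (P r) - deg (α r)`
(written additively as `defect q + deg (α r) ≤ defect (P r)`) whenever `α r ≠ 0`. -/
def IsSigmaBasis {K : Type*} [CommRing K] {m : ℕ} (f : Fin m → PowerSeries K)
    (n : Fin m → ℕ) (σ : ℕ) (P : Fin m → Fin m → K[X]) : Prop :=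
  (∀ r, IsSolution f σ (P r)) ∧
    ∀ q : Fin m → K[X], IsSolution f σ q →
      (∃! α : Fin m → K[X], ∀ i, q i = ∑ r, α r * P r i) ∧
      ∀ α : Fin m → K[X], (∀ i, q i = ∑ r, α r * P r i) →
        ∀ r, α r ≠ 0 →
          defect n q + (((α r).natDegree : ℤ) : WithTop ℤ) ≤ defect n (P r)

/-! The coefficients of a solution with respect to `P` and to the new sequence are related by
the invertible transvection `γ ↦ γ + α γ_s e_r`, so unique representations carry over, and so do
the defect bounds at every index but `r`. There the new coefficient is `β_r - α β_s`, whose degree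
is controlled by the bounds for `β_r` and `β_s` together with `defect (P s) + deg α ≤ defect (P r)`.
That hypothesis also gives `defect p̃ ≥ defect (P s)`; the reverse inequality is the σ-basis bound
for the representation `p̃ = 1 • P s + α • P r`. -/
section Transvection

variable {R M ι : Type*}

theorem forall_eq_sum_mul_iff {κ : Type*} [Semiring R] [Fintype ι] (q : κ → R) (γ : ι → R)
    (P : ι → κ → R) : (∀ i, q i = ∑ t, γ t * P t i) ↔ q = ∑ t, γ t • P t := by
  simp [funext_iff, Finset.sum_apply]

variable [DecidableEq ι]

theorem Function.update_add_eq_add_single [AddZeroClass M] (v : ι → M) (s : ι) (x : M) :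
    Function.update v s (v s + x) = v + Pi.single s x := by
  ext t
  rcases eq_or_ne t s with rfl | h <;> simp [*]

theorem sum_smul_update_add_smul [CommSemiring R] [AddCommMonoid M] [Module R M] [Fintype ι]
    (r s : ι) (a : R) (γ : ι → R) (v : ι → M) :
    ∑ t, γ t • Function.update v s (v s + a • v r) t
      = ∑ t, Function.update γ r (γ r + a * γ s) t • v t := by
  simp only [Function.update_add_eq_add_single, Pi.add_apply, smul_add, add_smul,
    Finset.sum_add_distrib, Pi.single_apply, smul_ite, ite_smul, smul_zero, zero_smul,
    Finset.sum_ite_eq', Finset.mem_univ, if_true, smul_smul, mul_comm]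

def transvectionEquiv [CommRing R] {r s : ι} (hrs : r ≠ s) (a : R) : (ι → R) ≃ (ι → R) where
  toFun γ := Function.update γ r (γ r + a * γ s)
  invFun β := Function.update β r (β r - a * β s)
  left_inv γ := by
    ext t
    rcases eq_or_ne t r with rfl | h <;> simp [Function.update_of_ne hrs.symm, *]
  right_inv β := by
    ext t
    rcases eq_or_ne t r with rfl | h <;> simp [Function.update_of_ne hrs.symm, *]

end Transvection

section Degree

variable {R : Type*} [Semiring R] {d E : WithTop ℤ}

theorem add_natDegree_add_le {x y : R[X]} (hx : x ≠ 0 → d + ((x.natDegree : ℤ) : WithTop ℤ) ≤ E)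
    (hy : y ≠ 0 → d + ((y.natDegree : ℤ) : WithTop ℤ) ≤ E) :
    x + y ≠ 0 → d + (((x + y).natDegree : ℤ) : WithTop ℤ) ≤ E := by
  intro hxy
  rcases eq_or_ne x 0 with rfl | hx0
  · simpa using hy (by simpa using hxy)
  rcases eq_or_ne y 0 with rfl | hy0
  · simpa using hx hx0
  rcases le_max_iff.mp (natDegree_add_le x y) with h | h
  · exact le_trans (by gcongr; exact_mod_cast h) (hx hx0)
  · exact le_trans (by gcongr; exact_mod_cast h) (hy hy0)

theorem add_natDegree_mul_le {c y : R[X]}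
    (hy : y ≠ 0 → d + ((c.natDegree : ℤ) : WithTop ℤ) + ((y.natDegree : ℤ) : WithTop ℤ) ≤ E) :
    c * y ≠ 0 → d + (((c * y).natDegree : ℤ) : WithTop ℤ) ≤ E := by
  intro hcy
  refine le_trans ?_ (hy (right_ne_zero_of_mul hcy))
  rw [add_assoc, ← WithTop.coe_add]
  gcongr
  exact_mod_cast natDegree_mul_le

end Degree

theorem add_natDegree_sub_mul_le {R : Type*} [Ring R] {d E F : WithTop ℤ} {x y a : R[X]}
    (hx : x ≠ 0 → d + ((x.natDegree : ℤ) : WithTop ℤ) ≤ E)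
    (hy : y ≠ 0 → d + ((y.natDegree : ℤ) : WithTop ℤ) ≤ F)
    (hFE : F + ((a.natDegree : ℤ) : WithTop ℤ) ≤ E) :
    x - a * y ≠ 0 → d + (((x - a * y).natDegree : ℤ) : WithTop ℤ) ≤ E := by
  rw [sub_eq_add_neg, ← neg_mul]
  refine add_natDegree_add_le hx (add_natDegree_mul_le fun hy0 => ?_)
  calc d + (((-a).natDegree : ℤ) : WithTop ℤ) + ((y.natDegree : ℤ) : WithTop ℤ)
      = d + ((y.natDegree : ℤ) : WithTop ℤ) + ((a.natDegree : ℤ) : WithTop ℤ) := by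
        rw [natDegree_neg, add_right_comm]
    _ ≤ F + ((a.natDegree : ℤ) : WithTop ℤ) := by gcongr; exact hy hy0
    _ ≤ E := hFE

section Defect

variable {R : Type*} [Semiring R] {m : ℕ} {n : Fin m → ℕ} {a : WithTop ℤ}

theorem defectTerm_of_ne_zero (ni : ℕ) {p : R[X]} (hp : p ≠ 0) :
    defectTerm ni p = (((ni : ℤ) - p.natDegree : ℤ) : WithTop ℤ) := by
  rw [defectTerm, degree_eq_natDegree hp]
  rfl

theorem le_defectTerm_iff {ni : ℕ} {p : R[X]} :
    a ≤ defectTerm ni p ↔ (p ≠ 0 → a + ((p.natDegree : ℤ) : WithTop ℤ) ≤ (ni : ℤ)) := by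
  rcases eq_or_ne p 0 with rfl | hp
  · simp [defectTerm]
  rw [defectTerm_of_ne_zero ni hp]
  induction a using WithTop.recTopCoe with
  | top => simp [hp]
  | coe a =>
    rw [← WithTop.coe_add, WithTop.coe_le_coe, WithTop.coe_le_coe]
    exact ⟨fun h _ => le_sub_iff_add_le.mp h, fun h => le_sub_iff_add_le.mpr (h hp)⟩

theorem le_defect_iff {p : Fin m → R[X]} : a ≤ defect n p ↔ ∀ i, a ≤ defectTerm (n i) (p i) := by
  simp [defect]

theorem le_defect_add {p q : Fin m → R[X]} (hp : a ≤ defect n p) (hq : a ≤ defect n q) :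
    a ≤ defect n (p + q) :=
  le_defect_iff.mpr fun i => le_defectTerm_iff.mpr <|
    add_natDegree_add_le (le_defectTerm_iff.mp (le_defect_iff.mp hp i))
      (le_defectTerm_iff.mp (le_defect_iff.mp hq i))

theorem le_defect_smul {c : R[X]} {p : Fin m → R[X]}
    (h : a + ((c.natDegree : ℤ) : WithTop ℤ) ≤ defect n p) : a ≤ defect n (c • p) :=
  le_defect_iff.mpr fun i => le_defectTerm_iff.mpr <|
    add_natDegree_mul_le (le_defectTerm_iff.mp (le_defect_iff.mp h i))

end Defect

theorem isSolution_iff_X_pow_dvd {K : Type*} [CommSemiring K] {m : ℕ}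
    {f : Fin m → PowerSeries K} {σ : ℕ} {p : Fin m → K[X]} :
    IsSolution f σ p ↔ PowerSeries.X ^ σ ∣ ∑ i, (p i : PowerSeries K) * f i :=
  PowerSeries.X_pow_dvd_iff.symm

theorem IsSolution.add_smul {K : Type*} [CommSemiring K] {m : ℕ} {f : Fin m → PowerSeries K}
    {σ : ℕ} {p q : Fin m → K[X]} (hp : IsSolution f σ p) (hq : IsSolution f σ q) (c : K[X]) :
    IsSolution f σ (p + c • q) := by
  rw [isSolution_iff_X_pow_dvd] at *
  have hsum : ∑ i, (((p + c • q) i : K[X]) : PowerSeries K) * f i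
      = ∑ i, (p i : PowerSeries K) * f i + c * ∑ i, (q i : PowerSeries K) * f i := by
    simp [add_mul, Finset.sum_add_distrib, Finset.mul_sum, mul_assoc]
  rw [hsum]
  exact dvd_add hp (dvd_mul_of_dvd_right hq _)

namespace IsSigmaBasis

variable {K : Type*} [CommRing K] [Nontrivial K] {m : ℕ} {f : Fin m → PowerSeries K}
  {n : Fin m → ℕ} {σ : ℕ} {P : Fin m → Fin m → K[X]} {r s : Fin m} {α : K[X]}

theorem defect_add_smul (hP : IsSigmaBasis f n σ P) (hrs : r ≠ s)
    (hb : defect n (P s) + ((α.natDegree : ℤ) : WithTop ℤ) ≤ defect n (P r)) :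
    defect n (P s + α • P r) = defect n (P s) := by
  refine le_antisymm ?_ (le_defect_add le_rfl (le_defect_smul hb))
  have hrepr : ∀ i,
      (P s + α • P r) i = ∑ t, (Pi.single s 1 + Pi.single r α : Fin m → K[X]) t * P t i := by
    intro i
    simp [add_mul, Finset.sum_add_distrib, Pi.single_apply]
  simpa [hrs] using (hP.2 _ ((hP.1 s).add_smul (hP.1 r) α)).2 _ hrepr s (by simp [hrs])

theorem update_add_smul (hP : IsSigmaBasis f n σ P) (hrs : r ≠ s)
    (hb : defect n (P s) + ((α.natDegree : ℤ) : WithTop ℤ) ≤ defect n (P r)) :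
    IsSigmaBasis f n σ (Function.update P s (P s + α • P r)) := by
  refine ⟨fun t => ?_, fun q hq => ?_⟩
  · rcases eq_or_ne t s with rfl | hts
    · simpa using (hP.1 t).add_smul (hP.1 r) α
    · simpa [hts] using hP.1 t
  obtain ⟨hex, hbound⟩ := hP.2 q hq
  have hrepr : ∀ γ, (∀ i, q i = ∑ t, γ t * Function.update P s (P s + α • P r) t i) ↔
      ∀ i, q i = ∑ t, transvectionEquiv hrs α γ t * P t i := by
    intro γ
    simp only [forall_eq_sum_mul_iff, sum_smul_update_add_smul]
    rfl
  refine ⟨(transvectionEquiv hrs α).existsUnique_congr hrepr |>.mpr hex, fun γ hγ t hγt => ?_⟩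
  set β := transvectionEquiv hrs α γ
  have hβ : ∀ t, β t ≠ 0 → defect n q + (((β t).natDegree : ℤ) : WithTop ℤ) ≤ defect n (P t) :=
    hbound β ((hrepr γ).mp hγ)
  have hβs : β s = γ s := Function.update_of_ne hrs.symm _ _
  rcases eq_or_ne t s with rfl | hts
  · rw [Function.update_self, hP.defect_add_smul hrs hb, ← hβs]
    exact hβ t (hβs ▸ hγt)
  rw [Function.update_of_ne hts]
  rcases eq_or_ne t r with rfl | htr
  · have hγr : γ t = β t - α * β s := by
      rw [hβs]
      simp [β, transvectionEquiv]
    rw [hγr] at hγt ⊢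
    exact add_natDegree_sub_mul_le (hβ t) (hβ s) hb hγt
  · have hβt : β t = γ t := Function.update_of_ne htr _ _
    exact hβt ▸ hβ t (hβt ▸ hγt)

end IsSigmaBasis

/-- **Elementary transformation of a σ-basis.**  Let `P` be a σ-basis of a
Hermite–Padé interpolation problem over a field `K`, let `r ≠ s` and let
`α ∈ K[x]` with `defect (P r) ≥ defect (P s) + deg α` (automatic when `α = 0`,
since then `deg α = -∞`).  Then replacing `P s` by `p̃ = P s + α • P r` again
yields a σ-basis of the same problem, and `defect p̃ = defect (P s)`. -/
theorem sigma_basis_replacement {K : Type*} [Field K] {m : ℕ}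
    (f : Fin m → PowerSeries K) (n : Fin m → ℕ) (σ : ℕ)
    (P : Fin m → Fin m → K[X]) (hP : IsSigmaBasis f n σ P)
    (r s : Fin m) (hrs : r ≠ s) (α : K[X])
    (hα : α = 0 ∨ defect n (P s) + ((α.natDegree : ℤ) : WithTop ℤ) ≤ defect n (P r)) :
    IsSigmaBasis f n σ (Function.update P s (fun i => P s i + α * P r i)) ∧
      defect n (fun i => P s i + α * P r i) = defect n (P s) := by
  rcases hα with rfl | hb
  · simpa using hP
  · exact ⟨hP.update_add_smul hrs hb, hP.defect_add_smul hrs hb⟩
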